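/- Let A, B be real n×n matrices satisfying: (c1) A is entrywise nonnegative, (c2) B_{ij} ≤ A_{ij} for all i ≠ j, and (c3) there exists an entrywise positive vector u with (B−A)u entrywise positive. Set μ = ρ((B−A)⁻¹A) and ρ(A,B) = μ/(1+μ). Then there exists a nonzero entrywise nonnegative vector x ∈ ℝⁿ with Ax = ρ(A,B)·Bx. -/

import Mathlib

/-! `C = B - A` has nonpositive off-diagonal entries and `C u > 0` for some `u > 0`, which makes
it monotone (`C v ≥ 0 → v ≥ 0`); hence `C` is invertible and `M = C⁻¹ A ≥ 0`. By Perron–Frobenius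
`M` has a nonnegative eigenvector `x` for `μ = ρ(M) ≥ 0`, and `A x = C M x = μ (B x - A x)`
rearranges to `A x = μ / (1 + μ) • B x`.

Perron–Frobenius for positive matrices comes from maximising `r` over the compact
Collatz–Wielandt set of pairs `(r, x)` with `x` in the simplex and `r x ≤ M x`. A nonnegative `M`
is approximated by `M + ε J`, and the limit eigenvalue is identified with `ρ(M)` through the
Collatz–Wielandt bound `M u ≤ c u, u > 0 → ρ(M) ≤ c`. -/

open Matrix

/-- Spectral radius of a real matrix: supremum of the absolute values of its
complex eigenvalues. -/
noncomputable def specRad {m : Type*} [Fintype m] [DecidableEq m] (M : Matrix m m ℝ) : ℝ :=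
  sSup ((fun z : ℂ => ‖z‖) '' spectrum ℂ (M.map (algebraMap ℝ ℂ)))

/-- Principal submatrix of `A` with rows and columns indexed by `J`. -/
def subm {n : ℕ} (A : Matrix (Fin n) (Fin n) ℝ) (J : Finset (Fin n)) :
    Matrix {i // i ∈ J} {i // i ∈ J} ℝ :=
  A.submatrix Subtype.val Subtype.val

/-- `X` is an M-matrix: `X = q•I − P` with `P ≥ 0` and `q ≥ ρ(P)`. -/
def IsMMatrix {m : Type*} [Fintype m] [DecidableEq m] (X : Matrix m m ℝ) : Prop :=
  ∃ q : ℝ, ∃ P : Matrix m m ℝ, (∀ i j, 0 ≤ P i j) ∧ X = q • 1 - P ∧ specRad P ≤ q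

/-- `X` is a nonsingular M-matrix: `X = q•I − P` with `P ≥ 0` and `q > ρ(P)`. -/
def IsNonsingMMatrix {m : Type*} [Fintype m] [DecidableEq m] (X : Matrix m m ℝ) : Prop :=
  ∃ q : ℝ, ∃ P : Matrix m m ℝ, (∀ i j, 0 ≤ P i j) ∧ X = q • 1 - P ∧ specRad P < q

open Filter Topology

variable {ι : Type*} [Fintype ι]

theorem ne_zero_of_mem_stdSimplex {x : ι → ℝ} (hx : x ∈ stdSimplex ℝ ι) : x ≠ 0 := by
  rintro rfl
  simpa using hx.2

namespace Matrix

theorem mem_spectrum_iff_exists_mulVec_eq_smul [DecidableEq ι] {K : Type*} [Field K]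
    (N : Matrix ι ι K) (z : K) : z ∈ spectrum K N ↔ ∃ v ≠ 0, N *ᵥ v = z • v := by
  rw [← spectrum_toLin', ← Module.End.hasEigenvalue_iff_mem_spectrum]
  constructor
  · intro h
    obtain ⟨v, hv, hv0⟩ := h.exists_hasEigenvector
    exact ⟨v, hv0, by simpa using Module.End.mem_eigenspace_iff.1 hv⟩
  · rintro ⟨v, hv0, hv⟩
    exact Module.End.hasEigenvalue_of_hasEigenvector
      ⟨Module.End.mem_eigenspace_iff.2 (by simpa using hv), hv0⟩

theorem ofReal_mem_spectrum_map [DecidableEq ι] {M : Matrix ι ι ℝ} {r : ℝ} {x : ι → ℝ}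
    (hx : x ≠ 0) (h : M *ᵥ x = r • x) : (r : ℂ) ∈ spectrum ℂ (M.map (algebraMap ℝ ℂ)) := by
  refine (mem_spectrum_iff_exists_mulVec_eq_smul _ _).2 ⟨(↑) ∘ x, ?_, funext fun i => ?_⟩
  · exact fun h0 => hx (funext fun i => by simpa using congrFun h0 i)
  · simpa [h] using (RingHom.map_mulVec (algebraMap ℝ ℂ) M x i).symm

theorem norm_le_of_mulVec_le [DecidableEq ι] {M : Matrix ι ι ℝ} (hM : ∀ i j, 0 ≤ M i j)
    {u : ι → ℝ} (hu : ∀ i, 0 < u i) {c : ℝ} (hc : ∀ i, (M *ᵥ u) i ≤ c * u i) {z : ℂ}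
    (hz : z ∈ spectrum ℂ (M.map (algebraMap ℝ ℂ))) : ‖z‖ ≤ c := by
  obtain ⟨v, hv0, hv⟩ := (mem_spectrum_iff_exists_mulVec_eq_smul _ _).1 hz
  obtain ⟨j₀, hj₀⟩ := Function.ne_iff.1 hv0
  have : Nonempty ι := ⟨j₀⟩
  obtain ⟨i, hi⟩ := Finite.exists_max fun j => ‖v j‖ / u j
  set s := ‖v i‖ / u i
  have hvs : ∀ j, ‖v j‖ ≤ s * u j := fun j => (div_le_iff₀ (hu j)).1 (hi j)
  have hs : 0 < s := pos_of_mul_pos_left ((norm_pos_iff.2 hj₀).trans_le (hvs j₀)) (hu j₀).le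
  have key : ‖z‖ * (s * u i) ≤ c * (s * u i) :=
    calc ‖z‖ * (s * u i) = ‖z * v i‖ := by
          rw [norm_mul, div_mul_cancel₀ _ (hu i).ne']
      _ = ‖∑ j, (M i j : ℂ) * v j‖ := by
          rw [show z * v i = (z • v) i from rfl, ← hv]; rfl
      _ ≤ ∑ j, M i j * (s * u j) := by
          refine (norm_sum_le _ _).trans (Finset.sum_le_sum fun j _ => ?_)
          rw [norm_mul, Complex.norm_real, Real.norm_of_nonneg (hM i j)]
          exact mul_le_mul_of_nonneg_left (hvs j) (hM i j)
      _ = s * (M *ᵥ u) i := by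
          rw [mulVec_apply_eq_sum, Finset.mul_sum]
          exact Finset.sum_congr rfl fun j _ => by ring
      _ ≤ c * (s * u i) := by nlinarith [hc i]
  exact le_of_mul_le_mul_right key (mul_pos hs (hu i))

theorem mulVec_pos_of_pos {M : Matrix ι ι ℝ} (hM : ∀ i j, 0 < M i j) {x : ι → ℝ}
    (hx0 : ∀ i, 0 ≤ x i) (hx : x ≠ 0) (i : ι) : 0 < (M *ᵥ x) i := by
  obtain ⟨j, hj⟩ := Function.ne_iff.1 hx
  exact Finset.sum_pos' (fun k _ => mul_nonneg (hM i k).le (hx0 k))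
    ⟨j, Finset.mem_univ j, mul_pos (hM i j) ((hx0 j).lt_of_ne' hj)⟩

theorem mulVec_le_mulVec_of_le {M N : Matrix ι ι ℝ} (h : ∀ i j, M i j ≤ N i j) {x : ι → ℝ}
    (hx : ∀ i, 0 ≤ x i) (i : ι) : (M *ᵥ x) i ≤ (N *ᵥ x) i :=
  Finset.sum_le_sum fun j _ => mul_le_mul_of_nonneg_right (h i j) (hx j)

theorem le_sum_of_mul_le_mulVec {M : Matrix ι ι ℝ} (hM : ∀ i j, 0 ≤ M i j) {x : ι → ℝ}
    (hx : x ∈ stdSimplex ℝ ι) {r : ℝ} (h : ∀ i, r * x i ≤ (M *ᵥ x) i) :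
    r ≤ ∑ i, ∑ j, M i j :=
  calc r = ∑ i, r * x i := by rw [← Finset.mul_sum, hx.2, mul_one]
    _ ≤ ∑ i, (M *ᵥ x) i := Finset.sum_le_sum fun i _ => h i
    _ ≤ ∑ i, ∑ j, M i j := Finset.sum_le_sum fun i _ => Finset.sum_le_sum fun j _ =>
        mul_le_of_le_one_right (hM i j) (mem_Icc_of_mem_stdSimplex hx j).2

/-- The improvement comes from `M (M x - r x)`, which is entrywise positive. -/
theorem exists_lt_mul_le_mulVec_mulVec {M : Matrix ι ι ℝ} (hM : ∀ i j, 0 < M i j)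
    {x : ι → ℝ} {r : ℝ} (hle : ∀ i, r * x i ≤ (M *ᵥ x) i) (hne : M *ᵥ x ≠ r • x) :
    ∃ r' > r, ∀ i, r' * (M *ᵥ x) i ≤ (M *ᵥ (M *ᵥ x)) i := by
  set z := M *ᵥ x - r • x
  have hz : ∀ i, 0 < (M *ᵥ z) i :=
    mulVec_pos_of_pos hM (fun i => sub_nonneg.2 (hle i)) (sub_ne_zero.2 hne)
  have hMMx : ∀ i, (M *ᵥ (M *ᵥ x)) i = r * (M *ᵥ x) i + (M *ᵥ z) i := by
    intro i
    simp only [z, mulVec_sub, mulVec_smul, Pi.sub_apply, Pi.smul_apply, smul_eq_mul]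
    ring
  have hsmall : ∀ᶠ δ in 𝓝[>] (0 : ℝ), ∀ i, δ * (M *ᵥ x) i < (M *ᵥ z) i :=
    nhdsWithin_le_nhds <| eventually_all.2 fun i =>
      (continuous_id.mul continuous_const).tendsto' 0 0 (zero_mul _) |>.eventually
        (gt_mem_nhds (hz i))
  obtain ⟨δ, hδ, hδpos⟩ := (hsmall.and self_mem_nhdsWithin).exists
  exact ⟨r + δ, lt_add_of_pos_right r hδpos, fun i => by rw [hMMx]; linarith [hδ i]⟩

def collatzWielandtSet (M : Matrix ι ι ℝ) : Set (ℝ × (ι → ℝ)) :=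
  {p | 0 ≤ p.1 ∧ p.2 ∈ stdSimplex ℝ ι ∧ ∀ i, p.1 * p.2 i ≤ (M *ᵥ p.2) i}

theorem isCompact_collatzWielandtSet {M : Matrix ι ι ℝ} (hM : ∀ i j, 0 ≤ M i j) :
    IsCompact (collatzWielandtSet M) := by
  refine ((isCompact_Icc (a := 0) (b := ∑ i, ∑ j, M i j)).prod
    (isCompact_stdSimplex ℝ ι)).of_isClosed_subset ?_ ?_
  · simp only [collatzWielandtSet, Set.ofPred_and, Set.ofPred_forall]
    refine (isClosed_le continuous_const continuous_fst).inter
      (((isClosed_stdSimplex ℝ ι).preimage continuous_snd).inter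
        (isClosed_iInter fun i => isClosed_le (by fun_prop) ?_))
    exact (continuous_apply i).comp (continuous_const.matrix_mulVec continuous_snd)
  · rintro ⟨r, x⟩ ⟨hr, hx, hle⟩
    exact ⟨⟨hr, le_sum_of_mul_le_mulVec hM hx hle⟩, hx⟩

theorem exists_pos_mulVec_eq_smul_of_pos [Nonempty ι] {M : Matrix ι ι ℝ}
    (hM : ∀ i j, 0 < M i j) :
    ∃ r : ℝ, 0 ≤ r ∧ ∃ x ∈ stdSimplex ℝ ι, (∀ i, 0 < x i) ∧ M *ᵥ x = r • x := by
  classical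
  obtain ⟨i₀⟩ := ‹Nonempty ι›
  have hK0 : (0, Pi.single i₀ 1) ∈ collatzWielandtSet M :=
    ⟨le_rfl, single_mem_stdSimplex ℝ i₀, fun i => by simpa using (hM i i₀).le⟩
  obtain ⟨⟨r, x⟩, ⟨hr, hx, hle⟩, hmax⟩ := (isCompact_collatzWielandtSet fun i j => (hM i j).le)
    |>.exists_isMaxOn ⟨_, hK0⟩ continuous_fst.continuousOn
  have hMx : ∀ i, 0 < (M *ᵥ x) i := mulVec_pos_of_pos hM hx.1 (ne_zero_of_mem_stdSimplex hx)
  have heig : M *ᵥ x = r • x := by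
    by_contra hne
    obtain ⟨r', hr', hle'⟩ := exists_lt_mul_le_mulVec_mulVec hM hle hne
    set s := ∑ i, (M *ᵥ x) i
    have hs : 0 < s := Finset.sum_pos (fun i _ => hMx i) Finset.univ_nonempty
    have : (r', s⁻¹ • (M *ᵥ x)) ∈ collatzWielandtSet M := by
      refine ⟨hr.trans hr'.le, ⟨fun i => ?_, ?_⟩, fun i => ?_⟩
      · exact mul_nonneg (inv_nonneg.2 hs.le) (hMx i).le
      · simp only [Pi.smul_apply, smul_eq_mul, ← Finset.mul_sum]
        exact inv_mul_cancel₀ hs.ne'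
      · simp only [mulVec_smul, Pi.smul_apply, smul_eq_mul]
        rw [mul_left_comm]
        exact mul_le_mul_of_nonneg_left (hle' i) (inv_nonneg.2 hs.le)
    exact not_le.2 hr' (hmax this)
  refine ⟨r, hr, x, hx, fun i => pos_of_mul_pos_right ?_ hr, heig⟩
  simpa [heig] using hMx i

theorem mulVec_eq_smul_of_tendsto {α R : Type*} [CommRing R] [TopologicalSpace R]
    [IsTopologicalRing R] [T2Space R] {l : Filter α} [l.NeBot] {N : α → Matrix ι ι R}
    {r : α → R} {x : α → ι → R} {N₀ : Matrix ι ι R} {r₀ : R} {x₀ : ι → R}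
    (hN : Tendsto N l (𝓝 N₀)) (hr : Tendsto r l (𝓝 r₀)) (hx : Tendsto x l (𝓝 x₀))
    (h : ∀ a, N a *ᵥ x a = r a • x a) : N₀ *ᵥ x₀ = r₀ • x₀ := by
  have hmul : Continuous fun p : Matrix ι ι R × (ι → R) => p.1 *ᵥ p.2 :=
    continuous_fst.matrix_mulVec continuous_snd
  have hNx : Tendsto (fun a => N a *ᵥ x a) l (𝓝 (N₀ *ᵥ x₀)) :=
    (hmul.tendsto _).comp (hN.prodMk_nhds hx)
  exact tendsto_nhds_unique hNx (by simpa only [h] using hr.smul hx)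

/-- Shifting `v` by the most negative multiple of `u` gives a nonnegative vector vanishing at
some `m`; the sign pattern of `C` makes its image nonpositive at `m`, contradicting `C u > 0`. -/
theorem nonneg_of_mulVec_nonneg {C : Matrix ι ι ℝ} (hoff : ∀ i j, i ≠ j → C i j ≤ 0)
    {u : ι → ℝ} (hu : ∀ i, 0 < u i) (hCu : ∀ i, 0 < (C *ᵥ u) i) {v : ι → ℝ}
    (hv : ∀ i, 0 ≤ (C *ᵥ v) i) (i : ι) : 0 ≤ v i := by
  by_contra! hvi
  have : Nonempty ι := ⟨i⟩
  obtain ⟨m, hm⟩ := Finite.exists_min fun j => v j / u j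
  set t := v m / u m
  have ht : t < 0 := (hm i).trans_lt (div_neg_of_neg_of_pos hvi (hu i))
  set w := v - t • u
  have hw : ∀ j, 0 ≤ w j := fun j => sub_nonneg.2 ((le_div_iff₀ (hu j)).1 (hm j))
  have hwm : w m = 0 := by simp [w, t, div_mul_cancel₀ _ (hu m).ne']
  have hCw_pos : 0 < (C *ᵥ w) m := by
    simp only [w, mulVec_sub, mulVec_smul, Pi.sub_apply, Pi.smul_apply, smul_eq_mul]
    nlinarith [hv m, hCu m]
  have hCw_nonpos : (C *ᵥ w) m ≤ 0 := Finset.sum_nonpos fun j _ => by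
    rcases eq_or_ne m j with rfl | hj
    · simp [hwm]
    · exact mul_nonpos_of_nonpos_of_nonneg (hoff m j hj) (hw j)
  linarith

theorem isUnit_of_mulVec_pos [DecidableEq ι] {C : Matrix ι ι ℝ}
    (hoff : ∀ i j, i ≠ j → C i j ≤ 0) {u : ι → ℝ} (hu : ∀ i, 0 < u i)
    (hCu : ∀ i, 0 < (C *ᵥ u) i) : IsUnit C := by
  refine mulVec_injective_iff_isUnit.1 fun v w hvw => funext fun i => le_antisymm ?_ ?_
  · simpa using nonneg_of_mulVec_nonneg hoff hu hCu (v := w - v) (by simp [mulVec_sub, hvw]) i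
  · simpa using nonneg_of_mulVec_nonneg hoff hu hCu (v := v - w) (by simp [mulVec_sub, hvw]) i

theorem nonneg_of_mul_nonneg {κ : Type*} {C : Matrix ι ι ℝ} (hoff : ∀ i j, i ≠ j → C i j ≤ 0)
    {u : ι → ℝ} (hu : ∀ i, 0 < u i) (hCu : ∀ i, 0 < (C *ᵥ u) i) {X : Matrix ι κ ℝ}
    (hX : ∀ i j, 0 ≤ (C * X) i j) (i : ι) (j : κ) : 0 ≤ X i j :=
  nonneg_of_mulVec_nonneg hoff hu hCu (v := fun k => X k j) (fun k => hX k j) i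

end Matrix

section SpectralRadius

variable [DecidableEq ι]

theorem specRad_nonneg (M : Matrix ι ι ℝ) : 0 ≤ specRad M :=
  Real.sSup_nonneg (by rintro _ ⟨z, -, rfl⟩; exact norm_nonneg z)

theorem norm_le_specRad {M : Matrix ι ι ℝ} {z : ℂ}
    (hz : z ∈ spectrum ℂ (M.map (algebraMap ℝ ℂ))) : ‖z‖ ≤ specRad M :=
  le_csSup ((finite_spectrum _).image _).bddAbove ⟨z, hz, rfl⟩

theorem specRad_le_of_mulVec_le [Nonempty ι] {M : Matrix ι ι ℝ} (hM : ∀ i j, 0 ≤ M i j)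
    {u : ι → ℝ} (hu : ∀ i, 0 < u i) {c : ℝ} (hc : ∀ i, (M *ᵥ u) i ≤ c * u i) :
    specRad M ≤ c := by
  obtain ⟨i⟩ := ‹Nonempty ι›
  have hMu : 0 ≤ (M *ᵥ u) i := Finset.sum_nonneg fun j _ => mul_nonneg (hM i j) (hu j).le
  refine Real.sSup_le ?_ (nonneg_of_mul_nonneg_left (hMu.trans (hc i)) (hu i))
  rintro _ ⟨z, hz, rfl⟩
  exact norm_le_of_mulVec_le hM hu hc hz

theorem le_specRad_of_mulVec_eq_smul {M : Matrix ι ι ℝ} {r : ℝ} {x : ι → ℝ} (hx : x ≠ 0)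
    (h : M *ᵥ x = r • x) : r ≤ specRad M :=
  (le_abs_self r).trans (by simpa using norm_le_specRad (ofReal_mem_spectrum_map hx h))

theorem specRad_le_of_le_of_mulVec_eq_smul [Nonempty ι] {M N : Matrix ι ι ℝ}
    (hM : ∀ i j, 0 ≤ M i j) (hMN : ∀ i j, M i j ≤ N i j) {u : ι → ℝ} (hu : ∀ i, 0 < u i)
    {c : ℝ} (hN : N *ᵥ u = c • u) : specRad M ≤ c :=
  specRad_le_of_mulVec_le hM hu fun i =>
    (mulVec_le_mulVec_of_le hMN (fun j => (hu j).le) i).trans_eq (by rw [hN]; rfl)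

theorem exists_mem_stdSimplex_mulVec_eq_specRad_smul [Nonempty ι] {M : Matrix ι ι ℝ}
    (hM : ∀ i j, 0 ≤ M i j) : ∃ x ∈ stdSimplex ℝ ι, M *ᵥ x = specRad M • x := by
  let J : Matrix ι ι ℝ := of fun _ _ => 1
  let ε : ℕ → ℝ := fun k => 1 / ((k : ℝ) + 1)
  have hε : ∀ k, 0 < ε k := fun k => by positivity
  have hM_le : ∀ k i j, M i j ≤ (M + ε k • J) i j := fun k i j => by
    simpa [J] using (hε k).le
  have hmono : ∀ k i j, (M + ε k • J) i j ≤ (M + ε 0 • J) i j := fun k i j => by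
    simpa [J, ε] using Nat.one_div_le_one_div (α := ℝ) k.zero_le
  choose r hr x hx hxpos heig using fun k => exists_pos_mulVec_eq_smul_of_pos (M := M + ε k • J)
    fun i j => (hM i j).trans_lt (by simpa [J] using hε k)
  have hr_le : ∀ k, r k ≤ r 0 := fun k =>
    (le_specRad_of_mulVec_eq_smul (ne_zero_of_mem_stdSimplex (hx k)) (heig k)).trans
      (specRad_le_of_le_of_mulVec_eq_smul (fun i j => (hM_le k i j).trans' (hM i j))
        (hmono k) (hxpos 0) (heig 0))
  obtain ⟨⟨r₀, x₀⟩, ⟨hr₀, hx₀⟩, φ, hφ, hlim⟩ :=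
    (isCompact_Icc.prod (isCompact_stdSimplex ℝ ι)).tendsto_subseq (x := fun k => (r k, x k))
      fun k => ⟨⟨hr k, hr_le k⟩, hx k⟩
  have hr_lim : Tendsto (fun k => r (φ k)) atTop (𝓝 r₀) := (continuous_fst.tendsto _).comp hlim
  have hx_lim : Tendsto (fun k => x (φ k)) atTop (𝓝 x₀) := (continuous_snd.tendsto _).comp hlim
  have hε_lim : Tendsto (ε ∘ φ) atTop (𝓝 0) :=
    tendsto_one_div_add_atTop_nhds_zero_nat.comp hφ.tendsto_atTop
  have heig₀ : M *ᵥ x₀ = r₀ • x₀ :=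
    mulVec_eq_smul_of_tendsto (by simpa using tendsto_const_nhds.add (hε_lim.smul_const J))
      hr_lim hx_lim fun k => heig (φ k)
  have hr₀_eq : r₀ = specRad M :=
    le_antisymm (le_specRad_of_mulVec_eq_smul (ne_zero_of_mem_stdSimplex hx₀) heig₀)
      (ge_of_tendsto' hr_lim fun k =>
        specRad_le_of_le_of_mulVec_eq_smul hM (hM_le (φ k)) (hxpos (φ k)) (heig (φ k)))
  exact ⟨x₀, hx₀, hr₀_eq ▸ heig₀⟩

end SpectralRadius

/-- Under (c1)–(c3), there is a nonzero entrywise nonnegative eigenvector of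
the pencil `(A,B)` for the eigenvalue `ρ(A,B) = μ/(1+μ)`, `μ = ρ((B−A)⁻¹A)`. -/
theorem stmt_4 {n : ℕ} (hn : 0 < n) (A B : Matrix (Fin n) (Fin n) ℝ)
    (hc1 : ∀ i j, 0 ≤ A i j)
    (hc2 : ∀ i j, i ≠ j → B i j ≤ A i j)
    (hc3 : ∃ u : Fin n → ℝ, (∀ i, 0 < u i) ∧ ∀ i, 0 < (B - A).mulVec u i)
    (μ ρAB : ℝ) (hμ : μ = specRad ((B - A)⁻¹ * A)) (hρ : ρAB = μ / (1 + μ)) :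
    ∃ x : Fin n → ℝ, x ≠ 0 ∧ (∀ i, 0 ≤ x i) ∧ A.mulVec x = ρAB • B.mulVec x := by
  obtain ⟨u, hu, hCu⟩ := hc3
  have hoff : ∀ i j, i ≠ j → (B - A) i j ≤ 0 := fun i j hij => sub_nonpos.2 (hc2 i j hij)
  have hdet : IsUnit (B - A).det :=
    (isUnit_iff_isUnit_det _).1 (isUnit_of_mulVec_pos hoff hu hCu)
  have hCM : (B - A) * ((B - A)⁻¹ * A) = A := mul_nonsing_inv_cancel_left _ A hdet
  have hM : ∀ i j, 0 ≤ ((B - A)⁻¹ * A) i j := nonneg_of_mul_nonneg hoff hu hCu (by rwa [hCM])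
  have : Nonempty (Fin n) := ⟨⟨0, hn⟩⟩
  obtain ⟨x, hx, hMx⟩ := exists_mem_stdSimplex_mulVec_eq_specRad_smul hM
  refine ⟨x, ne_zero_of_mem_stdSimplex hx, hx.1, ?_⟩
  have hAx : A *ᵥ x = μ • (B *ᵥ x - A *ᵥ x) :=
    calc A *ᵥ x = (B - A) *ᵥ (((B - A)⁻¹ * A) *ᵥ x) := by rw [mulVec_mulVec, hCM]
      _ = μ • (B *ᵥ x - A *ᵥ x) := by rw [hMx, ← hμ, mulVec_smul, sub_mulVec]
  have hμ0 : 0 ≤ μ := hμ ▸ specRad_nonneg _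
  rw [hρ, div_eq_inv_mul, mul_smul, eq_inv_smul_iff₀ (by positivity)]
  linear_combination (norm := module) hAx
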